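/- arXiv:1507.06148 — 4 statements merged into one kernel-verified Lean document; each statement's English description precedes it below -/
import Mathlib

section
/- Let p be an odd prime and let a_0,...,a_{p-1}, b_0,...,b_{p-1} be integers such that the sum of the a_i is congruent to the sum of the b_i modulo 2, and such that the sums ∑ a_i ζ_p^i and ∑ b_i ζ_p^i are equal, where ζ_p is a primitive p-th root of unity. Then a_i ≡ b_i (mod 2) for every i. -/
open Complex

noncomputable def zp (p : ℕ) : ℂ := Complex.exp (2 * Real.pi * Complex.I / p)

/-!
If `∑ cᵢ ζⁱ = 0` with rational `cᵢ`, the polynomial `∑ cᵢ Xⁱ` of degree `< p` vanishes at `ζ`, so it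
is divisible by the minimal polynomial `Φ_p = 1 + X + ⋯ + X^(p-1)` of degree `p - 1`; hence it is a
constant multiple of `Φ_p` and all `cᵢ` are equal. Applied to `cᵢ = aᵢ - bᵢ`, this gives
`∑ cᵢ = p c_j` for every `j`, and since `∑ cᵢ` is even and `p` is odd, every `c_j` is even.
-/

open Polynomial

theorem Polynomial.coeff_cyclotomic_prime (R : Type*) [Ring R] (p : ℕ) [Fact p.Prime] {i : ℕ}
    (hi : i < p) : (cyclotomic p R).coeff i = 1 := by
  simp [cyclotomic_prime, finsetSum_coeff, coeff_X_pow, Finset.mem_range.mpr hi]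

theorem IsPrimitiveRoot.eq_of_sum_mul_pow_eq_zero {K : Type*} [Field K] [CharZero K] {p : ℕ}
    [hp : Fact p.Prime] {ζ : K} (hζ : IsPrimitiveRoot ζ p) {c : Fin p → ℚ}
    (h : ∑ i, (c i : K) * ζ ^ (i : ℕ) = 0) (i j : Fin p) : c i = c j := by
  have haeval : aeval ζ (ofFn p c) = 0 := by
    simpa [ofFn_eq_sum_monomial, aeval_monomial, mul_comm] using h
  have hdvd : cyclotomic p ℚ ∣ ofFn p c := by
    rw [cyclotomic_eq_minpoly_rat hζ hp.out.pos]
    exact minpoly.dvd ℚ ζ haeval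
  have hdeg : (ofFn p c).natDegree ≤ (cyclotomic p ℚ).natDegree := by
    rw [natDegree_cyclotomic, Nat.totient_prime hp.out]
    exact Nat.le_sub_one_of_lt (ofFn_natDegree_lt hp.out.one_lt.le c)
  obtain ⟨r, hr⟩ : ∃ r, ofFn p c = C r * cyclotomic p ℚ :=
    ⟨_, eq_leadingCoeff_mul_of_monic_of_dvd_of_natDegree_le (cyclotomic.monic p ℚ) hdvd hdeg⟩
  have hcoeff (k : Fin p) : c k = r := by
    rw [← ofFn_coeff_eq_val_of_lt c k.isLt, hr, coeff_C_mul,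
      coeff_cyclotomic_prime ℚ p k.isLt, mul_one]
  rw [hcoeff i, hcoeff j]

theorem stmt_0 (p : ℕ) [Fact p.Prime] (hp2 : p ≠ 2)
    (a b : Fin p → ℤ)
    (hpar : (∑ i, a i) ≡ (∑ i, b i) [ZMOD 2])
    (hsum : ∑ i, (a i : ℂ) * zp p ^ (i : ℕ) = ∑ i, (b i : ℂ) * zp p ^ (i : ℕ)) :
    ∀ i, a i ≡ b i [ZMOD 2] := by
  intro i
  have hp : p.Prime := Fact.out
  have hζ : IsPrimitiveRoot (zp p) p := Complex.isPrimitiveRoot_exp p hp.ne_zero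
  have hrel : ∑ j, (((a j - b j : ℤ) : ℚ) : ℂ) * zp p ^ (j : ℕ) = 0 := by
    push_cast
    simp only [sub_mul, Finset.sum_sub_distrib, hsum, sub_self]
  have hconst (j : Fin p) : a j - b j = a i - b i := by
    exact_mod_cast hζ.eq_of_sum_mul_pow_eq_zero hrel j i
  have hdvd : 2 ∣ (p : ℤ) * (a i - b i) := by
    have hdiff : ∑ j, (a j - b j) = p * (a i - b i) := by simp [hconst, mul_sub]
    rw [← hdiff, Finset.sum_sub_distrib]
    exact hpar.symm.dvd
  have hcop : IsCoprime (2 : ℤ) p :=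
    Nat.isCoprime_iff_coprime.mpr (Nat.coprime_two_left.mpr (hp.odd_of_ne_two hp2))
  exact (Int.modEq_iff_dvd.mpr (hcop.dvd_of_dvd_mul_left hdvd)).symm
end

section
/- Let p be an odd prime, q = p^m with m even, and f: 𝔽_q → 𝔽_p a function such that ∑_{x ∈ 𝔽_q} ζ_p^{f(x)} = ε √(p*)^m with ε ∈ {1,-1}. Let N_f(a) = #{x ∈ 𝔽_q : f(x) = a}. Then N_f(0) = p^{m-1} + ε(p-1)(-1/p)^{m/2} p^{(m-2)/2}, and for each a ∈ 𝔽_p^×, N_f(a) = p^{m-1} - ε(-1/p)^{m/2} p^{(m-2)/2}. -/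
open Complex

noncomputable def sqrtPstar (p : ℕ) : ℂ :=
  if p % 4 = 1 then (Real.sqrt p : ℂ) else (Real.sqrt p : ℂ) * Complex.I

/-!
Grouping the character sum by the value of `f` gives `∑ₐ N_f(a) ζ_p^a = ε √(p*)^m`,
an integer `c = ε (-1/p)^{m/2} p^{m/2}`. The minimal polynomial of `ζ_p` over `ℚ` is
`1 + X + ⋯ + X^{p-1}`, so a rational relation `∑ₐ cₐ ζ_p^a = 0` forces all `cₐ` to be equal.
Applied to `N_f(a) - c·[a = 0]` this makes `N_f` constant off `0` and `N_f(0) = N_f(1) + c`;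
counting all of `𝔽_q` gives `p N_f(1) + c = p^m`.
-/

open Polynomial Finset

theorem sqrtPstar_sq {p : ℕ} [Fact p.Prime] (hp2 : p ≠ 2) :
    sqrtPstar p ^ 2 = (legendreSym p (-1) : ℂ) * p := by
  have hsqrt : ((Real.sqrt p : ℝ) : ℂ) ^ 2 = p := by
    rw [← ofReal_pow, Real.sq_sqrt (Nat.cast_nonneg p), ofReal_natCast]
  have hodd : p % 2 = 1 := Nat.odd_iff.mp ((Fact.out : p.Prime).odd_of_ne_two hp2)
  rw [legendreSym.at_neg_one hp2]
  rcases (by omega : p % 4 = 1 ∨ p % 4 = 3) with h | h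
  · simp [sqrtPstar, h, hsqrt, ZMod.χ₄_nat_one_mod_four h]
  · simp [sqrtPstar, h, mul_pow, hsqrt, ZMod.χ₄_nat_three_mod_four h]

theorem Fintype.sum_comp_eq_sum_card_fiber_mul {ι κ R : Type*} [Fintype ι] [Fintype κ]
    [DecidableEq κ] [NonAssocSemiring R] (f : ι → κ) (g : κ → R) :
    ∑ x, g (f x) = ∑ a, (#{x | f x = a} : R) * g a := by
  rw [← sum_fiberwise_of_maps_to' (g := f) (t := univ) fun _ _ => mem_univ _]
  simp only [sum_const, nsmul_eq_mul]

namespace IsPrimitiveRoot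

variable {K : Type*} [Field K] [CharZero K] {p : ℕ} [Fact p.Prime] {ζ : K}

theorem coeff_eq_of_sum_mul_pow_val_eq_zero (hζ : IsPrimitiveRoot ζ p) {c : ZMod p → ℚ}
    (h : ∑ a, (c a : K) * ζ ^ a.val = 0) (a b : ZMod p) : c a = c b := by
  have hp : p.Prime := Fact.out
  set P : ℚ[X] := ∑ a, C (c a) * X ^ a.val
  have hcoeff (b : ZMod p) : P.coeff b.val = c b := by
    simp [P, (ZMod.val_injective p).eq_iff]
  have hdvd : cyclotomic p ℚ ∣ P := by
    rw [cyclotomic_eq_minpoly_rat hζ hp.pos]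
    exact minpoly.dvd ℚ ζ (by simpa [P, map_sum] using h)
  have hdeg : P.natDegree ≤ (cyclotomic p ℚ).natDegree := by
    rw [natDegree_cyclotomic, Nat.totient_prime hp]
    exact natDegree_sum_le_of_forall_le _ _ fun a _ =>
      (natDegree_C_mul_X_pow_le _ _).trans (Nat.le_sub_one_of_lt a.val_lt)
  obtain ⟨k, hk⟩ : ∃ k, P = cyclotomic p ℚ * C k :=
    ⟨_, eq_mul_leadingCoeff_of_monic_of_dvd_of_natDegree_le (cyclotomic.monic p ℚ) hdvd hdeg⟩
  have hconst (b : ZMod p) : c b = k := by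
    rw [← hcoeff, hk, coeff_mul_C, cyclotomic_prime, finsetSum_coeff]
    simp [coeff_X_pow, b.val_lt]
  rw [hconst a, hconst b]

theorem coeff_eq_coeff_one_add_of_sum_mul_pow_val_eq (hζ : IsPrimitiveRoot ζ p) {c : ZMod p → ℚ}
    {s : ℚ} (h : ∑ a, (c a : K) * ζ ^ a.val = s) (a : ZMod p) :
    c a = c 1 + if a = 0 then s else 0 := by
  have h₀ : ∑ a, ((c a - if a = 0 then s else 0 : ℚ) : K) * ζ ^ a.val = 0 := by
    simp only [Rat.cast_sub, sub_mul, sum_sub_distrib, h, apply_ite (Rat.cast : ℚ → K),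
      Rat.cast_zero, ite_mul, zero_mul, sum_ite_eq', mem_univ, if_true, ZMod.val_zero, pow_zero,
      mul_one, sub_self]
  have := hζ.coeff_eq_of_sum_mul_pow_val_eq_zero h₀ a 1
  rw [if_neg one_ne_zero, sub_zero] at this
  linarith

variable {ι : Type*} [Fintype ι]

theorem card_fiber_eq_card_fiber_one_add (hζ : IsPrimitiveRoot ζ p) (f : ι → ZMod p) {c : ℤ}
    (h : ∑ x, ζ ^ (f x).val = c) (a : ZMod p) :
    (#{x | f x = a} : ℤ) = #{x | f x = 1} + if a = 0 then c else 0 := by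
  have := hζ.coeff_eq_coeff_one_add_of_sum_mul_pow_val_eq (c := fun a => (#{x | f x = a} : ℚ))
    (s := c) (by simpa [← Fintype.sum_comp_eq_sum_card_fiber_mul] using h) a
  exact_mod_cast this

theorem mul_card_fiber_one_add_eq_card (hζ : IsPrimitiveRoot ζ p) (f : ι → ZMod p) {c : ℤ}
    (h : ∑ x, ζ ^ (f x).val = c) : (p : ℤ) * #{x | f x = 1} + c = Fintype.card ι := by
  have htotal : Fintype.card ι = ∑ a, #{x | f x = a} :=
    card_eq_sum_card_fiberwise fun _ _ => mem_univ _
  rw [htotal, Nat.cast_sum, sum_congr rfl fun a _ => hζ.card_fiber_eq_card_fiber_one_add f h a]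
  simp [sum_add_distrib, ZMod.card]

end IsPrimitiveRoot

theorem stmt_5_general (p m : ℕ) [Fact p.Prime] (hp2 : p ≠ 2) (hm : 2 ≤ m) (hme : Even m)
    (F : Type) [Fintype F]
    (hcard : Fintype.card F = p ^ m)
    (f : F → ZMod p) (ε : ℤ)
    (hsum : ∑ x : F, zp p ^ (f x).val = (ε : ℂ) * sqrtPstar p ^ m) :
    (((Finset.univ.filter fun x : F => f x = 0).card : ℤ)
      = (p : ℤ) ^ (m - 1) + ε * (p - 1) * (legendreSym p (-1)) ^ (m / 2) * (p : ℤ) ^ ((m - 2) / 2))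
    ∧ ∀ a : ZMod p, a ≠ 0 →
      (((Finset.univ.filter fun x : F => f x = a).card : ℤ)
        = (p : ℤ) ^ (m - 1) - ε * (legendreSym p (-1)) ^ (m / 2) * (p : ℤ) ^ ((m - 2) / 2)) := by
  have hp : p.Prime := Fact.out
  obtain ⟨k, rfl⟩ : ∃ k, m = 2 * (k + 1) := by
    obtain ⟨r, hr⟩ := hme
    exact ⟨r - 1, by omega⟩
  rw [show 2 * (k + 1) - 1 = 2 * k + 1 by omega, show 2 * (k + 1) / 2 = k + 1 by omega,
    show (2 * (k + 1) - 2) / 2 = k by omega]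
  set L : ℤ := legendreSym p (-1)
  have hζ : IsPrimitiveRoot (zp p) p := Complex.isPrimitiveRoot_exp p hp.ne_zero
  have hsum' : ∑ x, zp p ^ (f x).val = ((ε * L ^ (k + 1) * p ^ (k + 1) : ℤ) : ℂ) := by
    rw [hsum, pow_mul, sqrtPstar_sq hp2]
    push_cast
    ring
  have htotal := hζ.mul_card_fiber_one_add_eq_card f hsum'
  rw [hcard] at htotal
  have hN₁ : (#{x | f x = 1} : ℤ) = p ^ (2 * k + 1) - ε * L ^ (k + 1) * p ^ k := by
    refine mul_left_cancel₀ (Nat.cast_ne_zero.mpr hp.ne_zero : (p : ℤ) ≠ 0) ?_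
    push_cast at htotal
    linear_combination htotal
  refine ⟨?_, fun a ha => ?_⟩
  · rw [hζ.card_fiber_eq_card_fiber_one_add f hsum' 0, if_pos rfl, hN₁]
    ring
  · rw [hζ.card_fiber_eq_card_fiber_one_add f hsum' a, if_neg ha, hN₁]
    ring

theorem stmt_5 (p m : ℕ) [Fact p.Prime] (hp2 : p ≠ 2) (hm : 2 ≤ m) (hme : Even m)
    (F : Type) [Field F] [Fintype F] [DecidableEq F]
    (hcard : Fintype.card F = p ^ m)
    (f : F → ZMod p) (ε : ℤ) (hε : ε = 1 ∨ ε = -1)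
    (hsum : ∑ x : F, zp p ^ (f x).val = (ε : ℂ) * sqrtPstar p ^ m) :
    (((Finset.univ.filter fun x : F => f x = 0).card : ℤ)
      = (p : ℤ) ^ (m - 1) + ε * (p - 1) * (legendreSym p (-1)) ^ (m / 2) * (p : ℤ) ^ ((m - 2) / 2))
    ∧ ∀ a : ZMod p, a ≠ 0 →
      (((Finset.univ.filter fun x : F => f x = a).card : ℤ)
        = (p : ℤ) ^ (m - 1) - ε * (legendreSym p (-1)) ^ (m / 2) * (p : ℤ) ^ ((m - 2) / 2)) :=
  stmt_5_general p m hp2 hm hme F hcard f ε hsum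
end

section
/- Let f ∈ RF be a weakly regular bent function with dual f*. If f(ax) = a^h f(x) for all a ∈ 𝔽_p^× with gcd(h-1,p-1)=1, and l satisfies l(h-1) ≡ 1 (mod p-1), then f*(aβ) = a^{l+1} f*(β) for all a ∈ 𝔽_p^× and β ∈ 𝔽_q, and gcd((l+1)-1, p-1) = 1. Consequently f* ∈ RF. -/
open Complex

/-!
Apply to `W_f(β) = ε √(p*)^m ζ^{f*(β)}` the conjugation `σ_t : ζ ↦ ζ^t` of `ℚ(ζ)`, where
`t = a^{l+1}`. The substitution `x = a^l y` together with `f(a^l y) = a^{lh} f(y) = t f(y)` turns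
`σ_t(W_f(β))` into `W_f(aβ)`. The factor `G = ε √(p*)^m` has a rational square, so `σ_t(G) = ± G`;
the sign `-1` is impossible because `-ζ^k` is not a `p`-th root of unity for odd `p`. Hence
`ζ^{f*(aβ)} = ζ^{t f*(β)}`.
-/

open IntermediateField Polynomial

section Cyclotomic

variable {L : Type*} [Field L]

theorem IsPrimitiveRoot.exists_algHom_adjoin_gen_eq_pow [CharZero L] {ζ : L} {n : ℕ}
    (hζ : IsPrimitiveRoot ζ n) (hn : 0 < n) {t : ℕ} (ht : t.Coprime n) :
    ∃ φ : ℚ⟮ζ⟯ →ₐ[ℚ] L, φ (AdjoinSimple.gen ℚ ζ) = ζ ^ t := by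
  have hroot : ζ ^ t ∈ (minpoly ℚ ζ).aroots L := by
    rw [mem_aroots, ← cyclotomic_eq_minpoly_rat hζ hn, aeval_def, eval₂_eq_eval_map,
      map_cyclotomic]
    exact ⟨cyclotomic_ne_zero n ℚ, (hζ.pow_of_coprime t ht).isRoot_cyclotomic hn⟩
  exact ⟨_, algHomAdjoinIntegralEquiv_symm_apply_gen ℚ (hζ.isIntegral hn).tower_top ⟨_, hroot⟩⟩

theorem AlgHom.apply_eq_or_eq_neg_of_sq_eq_algebraMap {F K : Type*} [CommSemiring F]
    [CommSemiring K] [Algebra F K] [Algebra F L] [Algebra K L] [IsScalarTower F K L]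
    (φ : K →ₐ[F] L) {x : K} {r : F} (hx : x ^ 2 = algebraMap F K r) :
    φ x = algebraMap K L x ∨ φ x = -algebraMap K L x := by
  apply sq_eq_sq_iff_eq_or_eq_neg.mp
  rw [← map_pow, ← map_pow, hx, AlgHom.commutes, ← IsScalarTower.algebraMap_apply]

theorem pow_ne_neg_pow_of_odd [CharZero L] {ζ : L} {n : ℕ} (hζ : ζ ^ n = 1) (hn : Odd n)
    (a b : ℕ) : ζ ^ a ≠ -ζ ^ b := by
  have hpow (k : ℕ) : (ζ ^ k) ^ n = 1 := by rw [← pow_mul, mul_comm, pow_mul, hζ, one_pow]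
  intro h
  have := congrArg (· ^ n) h
  norm_num [hn.neg_pow, hpow] at this

theorem IsPrimitiveRoot.mul_modEq_of_sum_pow_eq [CharZero L] {ζ : L} {n : ℕ}
    (hζ : IsPrimitiveRoot ζ n) (hn : Odd n) {ι : Type*} [Fintype ι] (e : ι → ℕ) {G : L}
    (hG : G ≠ 0) {r : ℚ} (hG2 : G ^ 2 = algebraMap ℚ L r) {t d d' : ℕ} (ht : t.Coprime n)
    (hsum : ∑ i, ζ ^ e i = G * ζ ^ d) (hsum_pow : ∑ i, ζ ^ (t * e i) = G * ζ ^ d') :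
    t * d ≡ d' [MOD n] := by
  obtain ⟨φ, hφ⟩ := hζ.exists_algHom_adjoin_gen_eq_pow hn.pos ht
  set z := AdjoinSimple.gen ℚ ζ
  have hz : (z : L) = ζ := AdjoinSimple.coe_gen ℚ ζ
  have hz0 : z ^ d ≠ 0 := pow_ne_zero _ fun h ↦ hζ.ne_zero hn.pos.ne' (by rw [← hz, h]; rfl)
  -- `G = W / ζ ^ d` lies in `ℚ(ζ)`, so the conjugation `φ` can only change its sign.
  set g : ℚ⟮ζ⟯ := (∑ i, z ^ e i) / z ^ d
  have hg : algebraMap ℚ⟮ζ⟯ L g = G := by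
    simp only [g, IntermediateField.algebraMap_apply, IntermediateField.coe_div,
      IntermediateField.coe_sum, IntermediateField.coe_pow, hz, hsum]
    exact mul_div_cancel_right₀ G (pow_ne_zero _ (hζ.ne_zero hn.pos.ne'))
  have hg2 : g ^ 2 = algebraMap ℚ ℚ⟮ζ⟯ r := (algebraMap ℚ⟮ζ⟯ L).injective <| by
    rw [map_pow, ← IsScalarTower.algebraMap_apply, hg, hG2]
  have hφg : φ g * ζ ^ (t * d) = G * ζ ^ d' := by
    rw [← hsum_pow, pow_mul, ← hφ, ← map_pow, ← map_mul, div_mul_cancel₀ _ hz0, map_sum]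
    simp only [map_pow, hφ, ← pow_mul, mul_comm t]
  have hfin := hζ.isOfFinOrder hn.pos.ne'
  rcases φ.apply_eq_or_eq_neg_of_sq_eq_algebraMap hg2 with hφ_eq | hφ_eq
  · rw [hφ_eq, hg] at hφg
    rw [hζ.eq_orderOf, ← hfin.pow_eq_pow_iff_modEq]
    exact mul_left_cancel₀ hG hφg
  · rw [hφ_eq, hg, neg_mul, ← mul_neg] at hφg
    exact absurd (mul_left_cancel₀ hG hφg).symm (pow_ne_neg_pow_of_odd hζ.pow_eq_one hn _ _)

end Cyclotomic

theorem sqrtPstar_sq_s10 (p : ℕ) :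
    sqrtPstar p ^ 2 = algebraMap ℚ ℂ (if p % 4 = 1 then (p : ℚ) else -p) := by
  unfold sqrtPstar
  split_ifs <;> simp [mul_pow, ← Complex.ofReal_pow, Real.sq_sqrt (Nat.cast_nonneg p)]

theorem sqrtPstar_ne_zero {p : ℕ} (hp : p ≠ 0) : sqrtPstar p ≠ 0 := by
  refine fun h ↦ hp ?_
  have := sqrtPstar_sq_s10 p
  rw [h, zero_pow two_ne_zero, eq_comm, map_eq_zero] at this
  split_ifs at this <;> simpa using this

theorem Nat.pos_of_mul_sub_one_modEq_one {l h n : ℕ} (hn : n ≠ 1)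
    (hl : l * (h - 1) ≡ 1 [MOD n]) : 0 < h := by
  refine Nat.pos_of_ne_zero fun h0 ↦ hn ?_
  rw [h0, zero_tsub, mul_zero] at hl
  exact Nat.dvd_one.mp ((Nat.modEq_zero_iff_dvd).mp hl.symm)

theorem ZMod.units_pow_pow_eq_mul_pow {p l h : ℕ} [Fact p.Prime] (a : (ZMod p)ˣ) (hh : 0 < h)
    (hl : l * (h - 1) ≡ 1 [MOD p - 1]) : (a ^ l) ^ h = a * a ^ l := by
  have hmod : l * h ≡ l + 1 [MOD p - 1] := by
    have := hl.add_right l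
    rwa [← Nat.mul_add_one, Nat.sub_add_cancel hh, add_comm 1] at this
  rw [← pow_mul, ← pow_succ', pow_eq_pow_iff_modEq]
  exact hmod.of_dvd (ZMod.orderOf_units_dvd_card_sub_one a)

theorem ZMod.pow_val_mul {M : Type*} [Monoid M] {p : ℕ} [NeZero p] {ζ : M} (hζ : ζ ^ p = 1)
    (s u : ZMod p) : ζ ^ (s * u).val = ζ ^ (s.val * u.val) := by
  rw [ZMod.val_mul, ← pow_eq_pow_mod _ hζ]

section Homogeneous

variable {p h : ℕ} {F : Type*} [Field F] [Algebra (ZMod p) F] {f : F → ZMod p}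
  (hhom : ∀ (a : (ZMod p)ˣ) (x : F),
    f (algebraMap (ZMod p) F (a : ZMod p) * x) = (a : ZMod p) ^ h * f x)
include hhom

theorem phase_algebraMap_mul {a b : (ZMod p)ˣ} (hab : b ^ h = a * b) (β y : F) :
    f (algebraMap (ZMod p) F b * y)
        + Algebra.trace (ZMod p) F (algebraMap (ZMod p) F a * β * (algebraMap (ZMod p) F b * y))
      = ((a * b : (ZMod p)ˣ) : ZMod p) * (f y + Algebra.trace (ZMod p) F (β * y)) := by
  have hscale : algebraMap (ZMod p) F a * β * (algebraMap (ZMod p) F b * y)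
      = ((a * b : (ZMod p)ˣ) : ZMod p) • (β * y) := by
    rw [Algebra.smul_def, Units.val_mul, map_mul]
    ring
  rw [hhom, ← Units.val_pow_eq_pow_val, hab, hscale, map_smul, smul_eq_mul, mul_add]

theorem sum_pow_phase_algebraMap_mul [Fintype F] {M : Type*} [Semiring M] (ζ : M)
    {a b : (ZMod p)ˣ} (hab : b ^ h = a * b) (β : F) :
    ∑ x, ζ ^ (f x + Algebra.trace (ZMod p) F (algebraMap (ZMod p) F a * β * x)).val
      = ∑ y, ζ ^ (((a * b : (ZMod p)ˣ) : ZMod p)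
          * (f y + Algebra.trace (ZMod p) F (β * y))).val := by
  rw [← Equiv.sum_comp (Units.mulLeft (Units.map (algebraMap (ZMod p) F : ZMod p →* F) b))]
  simp only [Units.mulLeft_apply, Units.coe_map, MonoidHom.coe_coe, phase_algebraMap_mul hhom hab]

end Homogeneous

theorem stmt_10_general (p m : ℕ) [Fact p.Prime] (hp2 : p ≠ 2)
    (F : Type) [Field F] [Fintype F] [Algebra (ZMod p) F]
    (f fstar : F → ZMod p) (ε : ℤ) (hε : ε = 1 ∨ ε = -1)
    (hW : ∀ β : F, ∑ x : F, zp p ^ (f x + Algebra.trace (ZMod p) F (β * x)).val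
      = (ε : ℂ) * sqrtPstar p ^ m * zp p ^ (fstar β).val)
    (h : ℕ)
    (hhom : ∀ (a : (ZMod p)ˣ) (x : F),
      f (algebraMap (ZMod p) F (a : ZMod p) * x) = (a : ZMod p) ^ h * f x)
    (l : ℕ) (hl : l * (h - 1) ≡ 1 [MOD p - 1]) :
    (∀ (a : (ZMod p)ˣ) (β : F),
      fstar (algebraMap (ZMod p) F (a : ZMod p) * β) = (a : ZMod p) ^ (l + 1) * fstar β)
    ∧ Nat.gcd ((l + 1) - 1) (p - 1) = 1 := by
  have hp : p.Prime := Fact.out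
  refine ⟨fun a β ↦ ?_, by simpa using Nat.coprime_of_mul_modEq_one _ hl⟩
  have hab : (a ^ l) ^ h = a * a ^ l :=
    ZMod.units_pow_pow_eq_mul_pow a (Nat.pos_of_mul_sub_one_modEq_one (by omega) hl) hl
  have hζ : IsPrimitiveRoot (zp p) p := Complex.isPrimitiveRoot_exp p hp.ne_zero
  have hG : (ε : ℂ) * sqrtPstar p ^ m ≠ 0 :=
    mul_ne_zero (by rcases hε with rfl | rfl <;> norm_num)
      (pow_ne_zero _ (sqrtPstar_ne_zero hp.ne_zero))
  have hG2 : ((ε : ℂ) * sqrtPstar p ^ m) ^ 2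
      = algebraMap ℚ ℂ (ε ^ 2 * (if p % 4 = 1 then (p : ℚ) else -p) ^ m) := by
    rw [mul_pow, ← pow_mul, mul_comm m, pow_mul, sqrtPstar_sq_s10, map_mul, map_pow, map_pow]
    simp
  have hW_conj : ∑ y, zp p ^ (((a * a ^ l : (ZMod p)ˣ) : ZMod p).val
        * (f y + Algebra.trace (ZMod p) F (β * y)).val)
      = (ε : ℂ) * sqrtPstar p ^ m * zp p ^ (fstar (algebraMap (ZMod p) F a * β)).val := by
    simp_rw [← ZMod.pow_val_mul hζ.pow_eq_one, ← sum_pow_phase_algebraMap_mul hhom _ hab]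
    exact hW _
  have key := hζ.mul_modEq_of_sum_pow_eq (hp.odd_of_ne_two hp2) _ hG hG2
    (ZMod.val_coe_unit_coprime _) (hW β) hW_conj
  have hcast := (ZMod.natCast_eq_natCast_iff _ _ p).2 key
  push_cast [ZMod.natCast_val, ZMod.cast_id] at hcast
  rw [← hcast, pow_succ']

theorem stmt_10 (p m : ℕ) [Fact p.Prime] (hp2 : p ≠ 2) (hm : 0 < m)
    (F : Type) [Field F] [Fintype F] [Algebra (ZMod p) F]
    (hcard : Fintype.card F = p ^ m)
    (f fstar : F → ZMod p) (ε : ℤ) (hε : ε = 1 ∨ ε = -1)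
    (hW : ∀ β : F, ∑ x : F, zp p ^ (f x + Algebra.trace (ZMod p) F (β * x)).val
      = (ε : ℂ) * sqrtPstar p ^ m * zp p ^ (fstar β).val)
    (hf0 : f 0 = 0) (h : ℕ) (hh : Nat.gcd (h - 1) (p - 1) = 1)
    (hhom : ∀ (a : (ZMod p)ˣ) (x : F),
      f (algebraMap (ZMod p) F (a : ZMod p) * x) = (a : ZMod p) ^ h * f x)
    (l : ℕ) (hl : l * (h - 1) ≡ 1 [MOD p - 1]) :
    (∀ (a : (ZMod p)ˣ) (β : F),
      fstar (algebraMap (ZMod p) F (a : ZMod p) * β) = (a : ZMod p) ^ (l + 1) * fstar β)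
    ∧ Nat.gcd ((l + 1) - 1) (p - 1) = 1 :=
  stmt_10_general p m hp2 F f fstar ε hε hW h hhom l hl
end

section
/- Let f ∈ RF with sign ε of the Walsh transform, m even, and β ∈ 𝔽_q^×. Then ∑_{y,z ∈ 𝔽_p^×} ∑_{x ∈ 𝔽_q} ζ_p^{y f(x) + z Tr(βx)} equals ε(p-1)²√(p*)^m if f*(β)=0, and -ε(p-1)√(p*)^m if f*(β)≠0. -/
/-!
Substituting `x ↦ a x` for a unit `a` of `𝔽_p` turns the `(y, z)`-sum into the
`(y a^h, z a)`-sum, by the homogeneity of `f` and the linearity of the trace. Since `a ↦ a^(h-1)`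
permutes `𝔽_p^×`, every orbit of this action meets the diagonal exactly once, so the double sum
is `(p - 1) ∑_c ∑_x ζ_p^(c (f x + Tr (β x)))`. The inner sum is the image of `W_f(β)` under
the Galois automorphism `ζ_p ↦ ζ_p^c`, which fixes `ε √(p*)^m` because `m` is even; so it equals
`ε √(p*)^m ζ_p^(c f*(β))`, and the sum over `c` gives `p - 1` or `-1`.
-/

open Complex

open Polynomial Finset

theorem IsPrimitiveRoot.aeval_pow_eq_zero_of_coprime {K : Type*} [Field K] [CharZero K] {ζ : K}
    {n : ℕ} (hζ : IsPrimitiveRoot ζ n) (hn : 0 < n) {P : ℚ[X]} (hP : aeval ζ P = 0) {c : ℕ}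
    (hc : c.Coprime n) : aeval (ζ ^ c) P = 0 := by
  obtain ⟨Q, rfl⟩ := minpoly.dvd ℚ ζ hP
  rw [map_mul, ← cyclotomic_eq_minpoly_rat hζ hn,
    cyclotomic_eq_minpoly_rat (hζ.pow_of_coprime c hc) hn, minpoly.aeval, zero_mul]

theorem Fintype.sum_units_eq_sub {K M : Type*} [Field K] [Fintype K] [DecidableEq K]
    [AddCommGroup M] (w : K → M) : ∑ c : Kˣ, w c = ∑ c, w c - w 0 := by
  rw [← sum_erase_eq_sub (mem_univ 0)]
  exact sum_nbij (fun c => c) (fun c _ => by simp) (fun _ _ _ _ => Units.ext)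
    (fun a ha => ⟨Units.mk0 a (ne_of_mem_erase ha), by simp, rfl⟩) (fun _ _ => rfl)

theorem sum_sum_eq_card_smul_sum_diag {G M : Type*} [CommGroup G] [Fintype G] [AddCommMonoid M]
    {h : ℕ} (hh : (Nat.card G).Coprime (h - 1)) (S : G → G → M)
    (hS : ∀ c a, S (c * a ^ h) (c * a) = S c c) :
    ∑ y, ∑ z, S y z = Fintype.card G • ∑ c, S c c := by
  have hinj : Function.Injective fun a : G => a ^ h / a := by
    rcases h with _ | k
    · simpa using inv_injective
    · intro a b hab
      apply (powCoprime hh).injective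
      simpa [pow_succ] using hab
  have hbij : Function.Bijective fun ca : G × G => (ca.1 * ca.2 ^ h, ca.1 * ca.2) := by
    refine Finite.injective_iff_bijective.mp ?_
    rintro ⟨c, a⟩ ⟨c', a'⟩ he
    simp only [Prod.mk.injEq] at he
    obtain rfl : a = a' := hinj <| by
      calc a ^ h / a = c * a ^ h / (c * a) := (mul_div_mul_left_eq_div _ _ _).symm
        _ = c' * a' ^ h / (c' * a') := by rw [he.1, he.2]
        _ = a' ^ h / a' := mul_div_mul_left_eq_div _ _ _
    simpa using he.2
  calc ∑ y, ∑ z, S y z = ∑ ca : G × G, S (ca.1 * ca.2 ^ h) (ca.1 * ca.2) :=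
        (Fintype.sum_prod_type' S).symm.trans
          (Fintype.sum_bijective _ hbij _ _ fun _ => rfl).symm
    _ = ∑ c, ∑ _a : G, S c c := by rw [Fintype.sum_prod_type]; simp only [hS]
    _ = Fintype.card G • ∑ c, S c c := by simp only [sum_const, card_univ, smul_sum]

theorem sum_homogeneous_add_trace_rescale {K F M : Type*} [Field K] [Field F] [Fintype F]
    [Algebra K F] [AddCommMonoid M] (w : K → M) {f : F → K} {h : ℕ}
    (hhom : ∀ (a : Kˣ) (x : F), f (algebraMap K F a * x) = (a : K) ^ h * f x)
    (β : F) (y z a : Kˣ) :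
    ∑ x, w (↑(y * a ^ h) * f x + ↑(z * a) * Algebra.trace K F (β * x))
      = ∑ x, w (y * f x + z * Algebra.trace K F (β * x)) := by
  have ha : algebraMap K F a ≠ 0 := by simp
  refine Fintype.sum_bijective _ (mulLeft_bijective₀ _ ha) _ _ fun x => congrArg w ?_
  have htr : Algebra.trace K F (β * (algebraMap K F a * x)) = a * Algebra.trace K F (β * x) := by
    rw [mul_left_comm, ← Algebra.smul_def, _root_.map_smul, smul_eq_mul]
  simp only [hhom, htr, Units.val_mul, Units.val_pow_eq_pow_val]
  ring

section stdAddChar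

variable (p : ℕ) [Fact p.Prime]

local notation "ψ" => (ZMod.stdAddChar : AddChar (ZMod p) ℂ)

theorem zp_isPrimitiveRoot : IsPrimitiveRoot (zp p) p :=
  isPrimitiveRoot_exp p (Fact.out : p.Prime).ne_zero

theorem zp_pow_val (j : ZMod p) : zp p ^ j.val = ψ j := by
  rw [zp, ← Complex.exp_nat_mul]
  conv_rhs => rw [← ZMod.natCast_zmod_val j, ← Int.cast_natCast, ZMod.stdAddChar_coe]
  congr 1
  push_cast
  ring

theorem sum_units_stdAddChar_mul (b : ZMod p) :
    ∑ c : (ZMod p)ˣ, ψ (c * b) = if b = 0 then (p - 1 : ℂ) else -1 := by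
  rw [Fintype.sum_units_eq_sub (fun c => ψ (c * b)),
    AddChar.sum_mulShift b (ZMod.isPrimitive_stdAddChar p)]
  split_ifs <;> simp

theorem sum_stdAddChar_unit_mul_of_sum_eq {F : Type*} [Fintype F] (g : F → ZMod p) (N : ℚ)
    (b : ZMod p) (hg : ∑ x, ψ (g x) = N * ψ b) (c : (ZMod p)ˣ) :
    ∑ x, ψ (c * g x) = N * ψ (c * b) := by
  have hconj (j : ZMod p) : (zp p ^ (c : ZMod p).val) ^ j.val = ψ (c * j) := by
    rw [← pow_mul, mul_comm, pow_mul, zp_pow_val, ← AddChar.map_nsmul_eq_pow, nsmul_eq_mul,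
      ZMod.natCast_zmod_val, mul_comm]
  -- `P` vanishes at `ζ_p`, hence at its conjugate `ζ_p ^ c`.
  let P : ℚ[X] := ∑ x, X ^ (g x).val - C N * X ^ b.val
  have hP : aeval (zp p) P = 0 := by simp [P, zp_pow_val, hg]
  have := (zp_isPrimitiveRoot p).aeval_pow_eq_zero_of_coprime (Fact.out : p.Prime).pos hP
    (ZMod.val_coe_unit_coprime c)
  simpa [P, hconj, sub_eq_zero] using this

end stdAddChar

theorem sqrtPstar_pow_of_even (p : ℕ) {m : ℕ} (hm : Even m) :
    ∃ r : ℚ, sqrtPstar p ^ m = r := by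
  obtain ⟨k, rfl⟩ := hm
  have hsq : sqrtPstar p ^ 2 = ((if p % 4 = 1 then p else -p : ℚ) : ℂ) := by
    unfold sqrtPstar
    split_ifs
    · rw [← Complex.ofReal_pow, Real.sq_sqrt (by positivity)]; norm_num
    · rw [mul_pow, Complex.I_sq, ← Complex.ofReal_pow, Real.sq_sqrt (by positivity)]
      push_cast; ring
  exact ⟨_, by rw [← two_mul, pow_mul, hsq, ← Rat.cast_pow]⟩

theorem stmt_11_general (p m : ℕ) [Fact p.Prime] (hme : Even m)
    (F : Type) [Field F] [Fintype F] [Algebra (ZMod p) F]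
    (f fstar : F → ZMod p) (ε : ℤ)
    (hW : ∀ β : F, ∑ x : F, zp p ^ (f x + Algebra.trace (ZMod p) F (β * x)).val
      = (ε : ℂ) * sqrtPstar p ^ m * zp p ^ (fstar β).val)
    (h : ℕ) (hh : Nat.gcd (h - 1) (p - 1) = 1)
    (hhom : ∀ (a : (ZMod p)ˣ) (x : F),
      f (algebraMap (ZMod p) F (a : ZMod p) * x) = (a : ZMod p) ^ h * f x)
    (β : F) :
    ∑ y : (ZMod p)ˣ, ∑ z : (ZMod p)ˣ, ∑ x : F,
        zp p ^ (((y : ZMod p) * f x + (z : ZMod p) * Algebra.trace (ZMod p) F (β * x)).val)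
      = if fstar β = 0 then (ε : ℂ) * (p - 1) ^ 2 * sqrtPstar p ^ m
        else -(ε : ℂ) * (p - 1) * sqrtPstar p ^ m := by
  simp only [zp_pow_val] at hW ⊢
  obtain ⟨r, hr⟩ := sqrtPstar_pow_of_even p hme
  have hWβ : ∑ x, ZMod.stdAddChar (f x + Algebra.trace (ZMod p) F (β * x))
      = ((ε * r : ℚ) : ℂ) * ZMod.stdAddChar (fstar β) := by
    rw [hW, hr]; push_cast; ring
  have hcop : (Nat.card (ZMod p)ˣ).Coprime (h - 1) := by
    rwa [Nat.card_eq_fintype_card, ZMod.card_units, Nat.coprime_comm]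
  rw [sum_sum_eq_card_smul_sum_diag hcop
    (fun y z => ∑ x, ZMod.stdAddChar
      ((y : ZMod p) * f x + (z : ZMod p) * Algebra.trace (ZMod p) F (β * x)))
    fun c a => sum_homogeneous_add_trace_rescale _ hhom β c c a]
  simp_rw [← mul_add, sum_stdAddChar_unit_mul_of_sum_eq p _ _ _ hWβ]
  rw [← mul_sum, sum_units_stdAddChar_mul, ZMod.card_units, nsmul_eq_mul,
    Nat.cast_pred (Fact.out : p.Prime).pos, hr]
  split_ifs <;> push_cast <;> ring

theorem stmt_11 (p m : ℕ) [Fact p.Prime] (hp2 : p ≠ 2) (hme : Even m) (hm : 0 < m)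
    (F : Type) [Field F] [Fintype F] [DecidableEq F] [Algebra (ZMod p) F]
    (hcard : Fintype.card F = p ^ m)
    (f fstar : F → ZMod p) (ε : ℤ) (hε : ε = 1 ∨ ε = -1)
    (hW : ∀ β : F, ∑ x : F, zp p ^ (f x + Algebra.trace (ZMod p) F (β * x)).val
      = (ε : ℂ) * sqrtPstar p ^ m * zp p ^ (fstar β).val)
    (hf0 : f 0 = 0) (h : ℕ) (hh : Nat.gcd (h - 1) (p - 1) = 1)
    (hhom : ∀ (a : (ZMod p)ˣ) (x : F),
      f (algebraMap (ZMod p) F (a : ZMod p) * x) = (a : ZMod p) ^ h * f x)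
    (β : F) (hβ : β ≠ 0) :
    ∑ y : (ZMod p)ˣ, ∑ z : (ZMod p)ˣ, ∑ x : F,
        zp p ^ (((y : ZMod p) * f x + (z : ZMod p) * Algebra.trace (ZMod p) F (β * x)).val)
      = if fstar β = 0 then (ε : ℂ) * (p - 1) ^ 2 * sqrtPstar p ^ m
        else -(ε : ℂ) * (p - 1) * sqrtPstar p ^ m :=
  stmt_11_general p m hme F f fstar ε hW h hh hhom β
end
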